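/- arXiv:2309.16966 — 5 statements merged into one kernel-verified Lean document; each statement's English description precedes it below -/
import Mathlib

section
/- With the coefficients a_{r,s}, b_{r,s}, c_{r,s}, d_{r,s} defined as in the context, for every integer n ≥ 0 and all integers 0 ≤ j ≤ n−1 and 0 ≤ k ≤ n, the numbers a_{n,j} and d_{n,k} are rational, and the numbers b_{n,j} and c_{n,j} are rational multiples of √3. -/
open Finset

/-- Non-recursive part of `Rpoly`. -/
noncomputable def GR (k : ℕ) : Polynomial ℝ :=
  Polynomial.C ((1 : ℝ) / (2 * (k + 1))) *
    ∑ j ∈ (Finset.range (k + 2)).filter (fun j => Even j),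
      Polynomial.C ((-1 : ℝ) ^ (j / 2) * ((k + 1).choose j : ℝ) * ((2 : ℝ) ^ j + 1)) *
        Polynomial.X ^ (k + 1 - j)

noncomputable def GS (k : ℕ) : Polynomial ℝ :=
  Polynomial.C ((1 : ℝ) / (2 * (k + 1))) *
    ∑ j ∈ (Finset.range (k + 2)).filter (fun j => Odd j),
      Polynomial.C ((-1 : ℝ) ^ ((j + 1) / 2) * ((k + 1).choose j : ℝ) * ((2 : ℝ) ^ j - 1)) *
        Polynomial.X ^ (k + 1 - j)

noncomputable def GP (k : ℕ) : Polynomial ℝ :=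
  Polynomial.C ((1 : ℝ) / (2 * (k + 1))) *
    ∑ j ∈ (Finset.range (k + 2)).filter (fun j => Even j),
      Polynomial.C ((-1 : ℝ) ^ (j / 2) * ((k + 1).choose j : ℝ) * ((5 : ℝ) ^ j + 1)) *
        Polynomial.X ^ (k + 1 - j)

noncomputable def GQ (k : ℕ) : Polynomial ℝ :=
  Polynomial.C ((1 : ℝ) / (2 * (k + 1))) *
    ∑ j ∈ (Finset.range (k + 2)).filter (fun j => Odd j),
      Polynomial.C ((-1 : ℝ) ^ ((j - 1) / 2) * ((k + 1).choose j : ℝ) * ((5 : ℝ) ^ j - 1)) *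
        Polynomial.X ^ (k + 1 - j)

noncomputable def GY (k : ℕ) : Polynomial ℝ :=
  Polynomial.C (-((1 : ℝ) / (k + 1))) *
    (Polynomial.X ^ (k + 1) +
      ∑ j ∈ (Finset.range (k + 2)).filter (fun j => Even j),
        Polynomial.C ((-1 : ℝ) ^ (j / 2) * ((k + 1).choose j : ℝ) * ((3 : ℝ) ^ j)) *
          Polynomial.X ^ (k + 1 - j))

noncomputable def GZ (k : ℕ) : Polynomial ℝ :=
  Polynomial.C (-((2 : ℝ) / (k + 1))) *
    ∑ j ∈ (Finset.range (k + 2)).filter (fun j => Even j),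
      Polynomial.C ((-1 : ℝ) ^ (j / 2) * ((k + 1).choose j : ℝ) * ((3 : ℝ) ^ j)) *
        Polynomial.X ^ (k + 1 - j)

/-- The common recursion: `F k = (1/(k+1)) ∑_{3 ≤ j ≤ k+1, j odd}
(−1)^{(j+1)/2} C(k+1,j) m^{j−1} F_{k+1−j} + G k`. -/
noncomputable def recFam (m : ℝ) (G : ℕ → Polynomial ℝ) : ℕ → Polynomial ℝ := fun k =>
  Nat.strongRecOn k fun k ih =>
    Polynomial.C ((1 : ℝ) / (k + 1)) *
      (∑ j ∈ ((Finset.range (k + 2)).filter (fun j => Odd j ∧ 3 ≤ j)).attach,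
        Polynomial.C ((-1 : ℝ) ^ ((j.1 + 1) / 2) * ((k + 1).choose j.1 : ℝ) * m ^ (j.1 - 1)) *
          ih (k + 1 - j.1) (by
            have hj := j.2
            simp only [Finset.mem_filter, Finset.mem_range] at hj
            omega))
    + G k

noncomputable def Rpoly : ℕ → Polynomial ℝ := recFam 3 GR
noncomputable def Spoly : ℕ → Polynomial ℝ := recFam 3 GS
noncomputable def Ppoly : ℕ → Polynomial ℝ := recFam 6 GP
noncomputable def Qpoly : ℕ → Polynomial ℝ := recFam 6 GQ
noncomputable def Ypoly : ℕ → Polynomial ℝ := recFam 3 GY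
noncomputable def Zpoly : ℕ → Polynomial ℝ := recFam 6 GZ
/-- Coefficient `r_{k,j}`: for even `k`, `R_k(x) = Σ_j r_{k,j} x^{2j−1}`;
for odd `k`, `R_k(x) = Σ_j r_{k,j} x^{2j}`. -/
noncomputable def rr (k j : ℕ) : ℝ :=
  if Even k then (Rpoly k).coeff (2 * j - 1) else (Rpoly k).coeff (2 * j)

noncomputable def pp (k j : ℕ) : ℝ :=
  if Even k then (Ppoly k).coeff (2 * j - 1) else (Ppoly k).coeff (2 * j)

noncomputable def yy (k j : ℕ) : ℝ :=
  if Even k then (Ypoly k).coeff (2 * j - 1) else (Ypoly k).coeff (2 * j)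

noncomputable def zz (k j : ℕ) : ℝ :=
  if Even k then (Zpoly k).coeff (2 * j - 1) else (Zpoly k).coeff (2 * j)

/-- Coefficient `s_{k,j}`: for odd `k`, `S_k(x) = Σ_j s_{k,j} x^{2j−1}`;
for even `k`, `S_k(x) = Σ_j s_{k,j} x^{2j}`. -/
noncomputable def ss (k j : ℕ) : ℝ :=
  if Even k then (Spoly k).coeff (2 * j) else (Spoly k).coeff (2 * j - 1)

noncomputable def qq (k j : ℕ) : ℝ :=
  if Even k then (Qpoly k).coeff (2 * j) else (Qpoly k).coeff (2 * j - 1)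

/-- The quadruple `(a_{n,·}, b_{n,·}, c_{n,·}, d_{n,·})` defined by the mutual
recursions of the paper, starting from `d_{0,0} = 1`. -/
noncomputable def ABCD : ℕ → ((ℕ → ℝ) × (ℕ → ℝ) × (ℕ → ℝ) × (ℕ → ℝ))
  | 0 => (fun _ => 0, fun _ => 0, fun _ => 0, fun j => if j = 0 then 1 else 0)
  | (n + 1) =>
    let cn := (ABCD n).2.2.1
    let dn := (ABCD n).2.2.2
    let a : ℕ → ℝ := fun j =>
      (Real.sqrt 3)⁻¹ * ∑ l ∈ Finset.Icc (j + 1) n,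
          cn (l - 1) * ((2 : ℝ) ^ (2 * (l : ℤ) - 2 * ((j : ℤ) + 1) + 1) * ss (2 * l - 1) (j + 1)
            + qq (2 * l - 1) (j + 1))
      + ∑ l ∈ Finset.Icc j n,
          dn l * ((2 : ℝ) ^ (2 * (l : ℤ) - 2 * ((j : ℤ) + 1) + 2) * rr (2 * l) (j + 1)
            + pp (2 * l) (j + 1))
    let b : ℕ → ℝ := fun h =>
      if h = 0 then
        (1 / 3 : ℝ) * ∑ l ∈ Finset.Icc 1 n,
            cn (l - 1) * ((2 : ℝ) ^ (2 * l) * (2 * rr (2 * l - 1) 0 + yy (2 * l - 1) 0)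
              + 2 * pp (2 * l - 1) 0 + zz (2 * l - 1) 0)
        + 2 * (Real.sqrt 3)⁻¹ * ∑ l ∈ Finset.Icc 0 n,
            dn l * ((2 : ℝ) ^ (2 * l + 1) * ss (2 * l) 0 + qq (2 * l) 0)
      else
        ∑ l ∈ Finset.Icc h n,
            cn (l - 1) * ((2 : ℝ) ^ (2 * (l : ℤ) - 2 * (h : ℤ)) * rr (2 * l - 1) h
              + pp (2 * l - 1) h)
        + (Real.sqrt 3)⁻¹ * ∑ l ∈ Finset.Icc (h - 1) n,
            dn l * ((2 : ℝ) ^ (2 * (l : ℤ) - 2 * (h : ℤ) + 1) * ss (2 * l) h + qq (2 * l) h)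
    let c : ℕ → ℝ := fun j =>
      (Real.sqrt 3)⁻¹ * ∑ l ∈ Finset.Icc (j + 1) (n + 1),
          a (l - 1) * ((2 : ℝ) ^ (2 * (l : ℤ) - 2 * ((j : ℤ) + 1) + 1) * ss (2 * l - 1) (j + 1)
            + qq (2 * l - 1) (j + 1))
      + ∑ l ∈ Finset.Icc j n,
          b l * ((2 : ℝ) ^ (2 * (l : ℤ) - 2 * ((j : ℤ) + 1) + 2) * rr (2 * l) (j + 1)
            + pp (2 * l) (j + 1))
    let d : ℕ → ℝ := fun h =>
      if h = 0 then
        (1 / 3 : ℝ) * ∑ l ∈ Finset.Icc 1 (n + 1),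
            a (l - 1) * ((2 : ℝ) ^ (2 * l) * (2 * rr (2 * l - 1) 0 + yy (2 * l - 1) 0)
              + 2 * pp (2 * l - 1) 0 + zz (2 * l - 1) 0)
        + 2 * (Real.sqrt 3)⁻¹ * ∑ l ∈ Finset.Icc 0 n,
            b l * ((2 : ℝ) ^ (2 * l + 1) * ss (2 * l) 0 + qq (2 * l) 0)
      else
        ∑ l ∈ Finset.Icc h (n + 1),
            a (l - 1) * ((2 : ℝ) ^ (2 * (l : ℤ) - 2 * (h : ℤ)) * rr (2 * l - 1) h
              + pp (2 * l - 1) h)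
        + (Real.sqrt 3)⁻¹ * ∑ l ∈ Finset.Icc h n,
            b l * ((2 : ℝ) ^ (2 * (l : ℤ) - 2 * (h : ℤ) + 1) * ss (2 * l) h + qq (2 * l) h)
    (a, b, c, d)

/-- `a_{n,j}` -/
noncomputable def aC (n j : ℕ) : ℝ := (ABCD n).1 j
/-- `b_{n,j}` -/
noncomputable def bC (n j : ℕ) : ℝ := (ABCD n).2.1 j
/-- `c_{n,j}` -/
noncomputable def cC (n j : ℕ) : ℝ := (ABCD n).2.2.1 j
/-- `d_{n,j}` -/
noncomputable def dC (n j : ℕ) : ℝ := (ABCD n).2.2.2 j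

/-! The polynomials `R, S, P, Q, Y, Z` have rational coefficients, since their recursions only
involve rational constants. The recursion for `(a, b, c, d)` then only multiplies by rationals
and by `1/√3 ∈ ℚ√3`, so it respects the `ℤ/2`-grading `ℚ(√3) = ℚ ⊕ ℚ√3`: by induction on `n`,
`a_{n,j}, d_{n,j}` lie in `ℚ` and `b_{n,j}, c_{n,j}` in `ℚ√3`, for every index `j`. -/

open Polynomial Submodule

lemma C_mem_lifts_of_mem_range {c : ℝ} (hc : c ∈ Set.range (algebraMap ℚ ℝ)) :
    C c ∈ lifts (algebraMap ℚ ℝ) := by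
  obtain ⟨q, rfl⟩ := hc
  exact C_mem_lifts _ q

lemma C_mul_sum_C_mul_X_pow_mem_lifts {ι : Type*} {c : ℝ} {s : Finset ι} {a : ι → ℝ}
    (hc : c ∈ Set.range (algebraMap ℚ ℝ)) (ha : ∀ j ∈ s, a j ∈ Set.range (algebraMap ℚ ℝ))
    (e : ι → ℕ) : C c * ∑ j ∈ s, C (a j) * X ^ e j ∈ lifts (algebraMap ℚ ℝ) :=
  mul_mem (C_mem_lifts_of_mem_range hc) <| sum_mem fun j hj =>
    mul_mem (C_mem_lifts_of_mem_range (ha j hj)) (X_pow_mem_lifts _ _)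

lemma GR_mem_lifts (k : ℕ) : GR k ∈ lifts (algebraMap ℚ ℝ) :=
  C_mul_sum_C_mul_X_pow_mem_lifts ⟨1 / (2 * (k + 1)), by simp⟩
    (fun j _ => ⟨(-1) ^ (j / 2) * (k + 1).choose j * (2 ^ j + 1), by simp⟩) _

lemma GS_mem_lifts (k : ℕ) : GS k ∈ lifts (algebraMap ℚ ℝ) :=
  C_mul_sum_C_mul_X_pow_mem_lifts ⟨1 / (2 * (k + 1)), by simp⟩
    (fun j _ => ⟨(-1) ^ ((j + 1) / 2) * (k + 1).choose j * (2 ^ j - 1), by simp⟩) _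

lemma GP_mem_lifts (k : ℕ) : GP k ∈ lifts (algebraMap ℚ ℝ) :=
  C_mul_sum_C_mul_X_pow_mem_lifts ⟨1 / (2 * (k + 1)), by simp⟩
    (fun j _ => ⟨(-1) ^ (j / 2) * (k + 1).choose j * (5 ^ j + 1), by simp⟩) _

lemma GQ_mem_lifts (k : ℕ) : GQ k ∈ lifts (algebraMap ℚ ℝ) :=
  C_mul_sum_C_mul_X_pow_mem_lifts ⟨1 / (2 * (k + 1)), by simp⟩
    (fun j _ => ⟨(-1) ^ ((j - 1) / 2) * (k + 1).choose j * (5 ^ j - 1), by simp⟩) _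

lemma GY_mem_lifts (k : ℕ) : GY k ∈ lifts (algebraMap ℚ ℝ) :=
  mul_mem (C_mem_lifts_of_mem_range ⟨-(1 / (k + 1)), by simp⟩) <|
    add_mem (X_pow_mem_lifts _ _) <| sum_mem fun j _ =>
      mul_mem (C_mem_lifts_of_mem_range ⟨(-1) ^ (j / 2) * (k + 1).choose j * 3 ^ j, by simp⟩)
        (X_pow_mem_lifts _ _)

lemma GZ_mem_lifts (k : ℕ) : GZ k ∈ lifts (algebraMap ℚ ℝ) :=
  C_mul_sum_C_mul_X_pow_mem_lifts ⟨-(2 / (k + 1)), by simp⟩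
    (fun j _ => ⟨(-1) ^ (j / 2) * (k + 1).choose j * 3 ^ j, by simp⟩) _

lemma recFam_eq (m : ℝ) (G : ℕ → ℝ[X]) (k : ℕ) :
    recFam m G k =
      C ((1 : ℝ) / (k + 1)) *
        (∑ j ∈ ((Finset.range (k + 2)).filter (fun j => Odd j ∧ 3 ≤ j)).attach,
          C ((-1 : ℝ) ^ ((j.1 + 1) / 2) * ((k + 1).choose j.1 : ℝ) * m ^ (j.1 - 1)) *
            recFam m G (k + 1 - j.1))
      + G k := by
  conv_lhs => rw [recFam, Nat.strongRecOn_eq]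
  rfl

lemma recFam_mem_lifts {m : ℝ} (hm : m ∈ Set.range (algebraMap ℚ ℝ)) {G : ℕ → ℝ[X]}
    (hG : ∀ k, G k ∈ lifts (algebraMap ℚ ℝ)) (k : ℕ) :
    recFam m G k ∈ lifts (algebraMap ℚ ℝ) := by
  obtain ⟨m, rfl⟩ := hm
  induction k using Nat.strongRecOn with
  | ind k ih =>
    rw [recFam_eq]
    refine add_mem (mul_mem (C_mem_lifts_of_mem_range ⟨1 / (k + 1), by simp⟩) <|
      sum_mem fun j _ => mul_mem ?_ (ih _ ?_)) (hG k)
    · exact C_mem_lifts_of_mem_range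
        ⟨(-1) ^ ((j.1 + 1) / 2) * (k + 1).choose j.1 * m ^ (j.1 - 1), by simp⟩
    · have hj := j.2
      simp only [Finset.mem_filter, Finset.mem_range] at hj
      omega

noncomputable def sqrtThreeGrade (i : ZMod 2) : Submodule ℚ ℝ := ℚ ∙ √3 ^ i.val

lemma mem_sqrtThreeGrade_zero {x : ℝ} : x ∈ sqrtThreeGrade 0 ↔ ∃ q : ℚ, x = q := by
  simp [sqrtThreeGrade, mem_span_singleton, eq_comm]

lemma mem_sqrtThreeGrade_one {x : ℝ} : x ∈ sqrtThreeGrade 1 ↔ ∃ q : ℚ, x = √3 * q := by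
  simp [sqrtThreeGrade, mem_span_singleton, eq_comm, Rat.smul_def, mul_comm, ZMod.val_one]

lemma span_sqrt_three_pow_eq_mod_two (n : ℕ) : ℚ ∙ √3 ^ n = ℚ ∙ √3 ^ (n % 2) := by
  have h : √3 ^ n = ((3 : ℚ) ^ (n / 2)) • √3 ^ (n % 2) := by
    conv_lhs => rw [← Nat.div_add_mod n 2, pow_add, pow_mul, Real.sq_sqrt (by norm_num)]
    simp [Rat.smul_def]
  rw [h, span_singleton_smul_eq (by simp)]

lemma sqrtThreeGrade_mul (i j : ZMod 2) :
    sqrtThreeGrade i * sqrtThreeGrade j = sqrtThreeGrade (i + j) := by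
  rw [sqrtThreeGrade, sqrtThreeGrade, sqrtThreeGrade, span_mul_span, Set.singleton_mul_singleton,
    ← pow_add, span_sqrt_three_pow_eq_mod_two, ZMod.val_add]

lemma mul_mem_sqrtThreeGrade {i j : ZMod 2} {x y : ℝ} (hx : x ∈ sqrtThreeGrade i)
    (hy : y ∈ sqrtThreeGrade j) : x * y ∈ sqrtThreeGrade (i + j) :=
  sqrtThreeGrade_mul i j ▸ mul_mem_mul hx hy

lemma mul_mem_sqrtThreeGrade_zero_left {i : ZMod 2} {x y : ℝ}
    (hx : x ∈ sqrtThreeGrade 0) (hy : y ∈ sqrtThreeGrade i) : x * y ∈ sqrtThreeGrade i := by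
  simpa using mul_mem_sqrtThreeGrade hx hy

lemma mul_mem_sqrtThreeGrade_zero_right {i : ZMod 2} {x y : ℝ}
    (hx : x ∈ sqrtThreeGrade i) (hy : y ∈ sqrtThreeGrade 0) : x * y ∈ sqrtThreeGrade i := by
  simpa using mul_mem_sqrtThreeGrade hx hy

lemma mul_mem_sqrtThreeGrade_one_one {x y : ℝ}
    (hx : x ∈ sqrtThreeGrade 1) (hy : y ∈ sqrtThreeGrade 1) : x * y ∈ sqrtThreeGrade 0 :=
  (by decide : (1 : ZMod 2) + 1 = 0) ▸ mul_mem_sqrtThreeGrade hx hy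

lemma ratCast_mem_sqrtThreeGrade_zero (q : ℚ) : (q : ℝ) ∈ sqrtThreeGrade 0 :=
  mem_sqrtThreeGrade_zero.2 ⟨q, rfl⟩

lemma one_mem_sqrtThreeGrade_zero : (1 : ℝ) ∈ sqrtThreeGrade 0 := by
  simpa using ratCast_mem_sqrtThreeGrade_zero 1

lemma two_mem_sqrtThreeGrade_zero : (2 : ℝ) ∈ sqrtThreeGrade 0 := by
  simpa using ratCast_mem_sqrtThreeGrade_zero 2

lemma two_zpow_mem_sqrtThreeGrade_zero (z : ℤ) : (2 : ℝ) ^ z ∈ sqrtThreeGrade 0 := by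
  simpa using ratCast_mem_sqrtThreeGrade_zero (2 ^ z)

lemma two_pow_mem_sqrtThreeGrade_zero (e : ℕ) : (2 : ℝ) ^ e ∈ sqrtThreeGrade 0 := by
  simpa using ratCast_mem_sqrtThreeGrade_zero (2 ^ e)

lemma inv_sqrt_three_mem_sqrtThreeGrade_one : (√3)⁻¹ ∈ sqrtThreeGrade 1 :=
  mem_sqrtThreeGrade_one.2 ⟨1 / 3, by field_simp; simp⟩

lemma coeff_mem_sqrtThreeGrade_zero {p : ℝ[X]} (hp : p ∈ lifts (algebraMap ℚ ℝ)) (n : ℕ) :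
    p.coeff n ∈ sqrtThreeGrade 0 := by
  obtain ⟨q, hq⟩ := (lifts_iff_coeff_lifts p).1 hp n
  exact hq ▸ ratCast_mem_sqrtThreeGrade_zero q

lemma rr_mem_sqrtThreeGrade_zero (k j : ℕ) : rr k j ∈ sqrtThreeGrade 0 := by
  unfold rr
  split <;>
    exact coeff_mem_sqrtThreeGrade_zero (recFam_mem_lifts ⟨3, by simp⟩ GR_mem_lifts k) _

lemma ss_mem_sqrtThreeGrade_zero (k j : ℕ) : ss k j ∈ sqrtThreeGrade 0 := by
  unfold ss
  split <;>
    exact coeff_mem_sqrtThreeGrade_zero (recFam_mem_lifts ⟨3, by simp⟩ GS_mem_lifts k) _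

lemma pp_mem_sqrtThreeGrade_zero (k j : ℕ) : pp k j ∈ sqrtThreeGrade 0 := by
  unfold pp
  split <;>
    exact coeff_mem_sqrtThreeGrade_zero (recFam_mem_lifts ⟨6, by simp⟩ GP_mem_lifts k) _

lemma qq_mem_sqrtThreeGrade_zero (k j : ℕ) : qq k j ∈ sqrtThreeGrade 0 := by
  unfold qq
  split <;>
    exact coeff_mem_sqrtThreeGrade_zero (recFam_mem_lifts ⟨6, by simp⟩ GQ_mem_lifts k) _

lemma yy_mem_sqrtThreeGrade_zero (k j : ℕ) : yy k j ∈ sqrtThreeGrade 0 := by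
  unfold yy
  split <;>
    exact coeff_mem_sqrtThreeGrade_zero (recFam_mem_lifts ⟨3, by simp⟩ GY_mem_lifts k) _

lemma zz_mem_sqrtThreeGrade_zero (k j : ℕ) : zz k j ∈ sqrtThreeGrade 0 := by
  unfold zz
  split <;>
    exact coeff_mem_sqrtThreeGrade_zero (recFam_mem_lifts ⟨6, by simp⟩ GZ_mem_lifts k) _

lemma two_zpow_mul_ss_add_qq_mem (z : ℤ) (k j : ℕ) :
    (2 : ℝ) ^ z * ss k j + qq k j ∈ sqrtThreeGrade 0 :=
  add_mem (mul_mem_sqrtThreeGrade_zero_left (two_zpow_mem_sqrtThreeGrade_zero z)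
    (ss_mem_sqrtThreeGrade_zero k j)) (qq_mem_sqrtThreeGrade_zero k j)

lemma two_pow_mul_ss_add_qq_mem (e k j : ℕ) :
    (2 : ℝ) ^ e * ss k j + qq k j ∈ sqrtThreeGrade 0 := by
  simpa using two_zpow_mul_ss_add_qq_mem e k j

lemma two_zpow_mul_rr_add_pp_mem (z : ℤ) (k j : ℕ) :
    (2 : ℝ) ^ z * rr k j + pp k j ∈ sqrtThreeGrade 0 :=
  add_mem (mul_mem_sqrtThreeGrade_zero_left (two_zpow_mem_sqrtThreeGrade_zero z)
    (rr_mem_sqrtThreeGrade_zero k j)) (pp_mem_sqrtThreeGrade_zero k j)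

lemma two_pow_mul_rr_yy_add_pp_zz_mem (e k : ℕ) :
    (2 : ℝ) ^ e * (2 * rr k 0 + yy k 0) + 2 * pp k 0 + zz k 0 ∈ sqrtThreeGrade 0 := by
  refine add_mem (add_mem (mul_mem_sqrtThreeGrade_zero_left
    (two_pow_mem_sqrtThreeGrade_zero e) (add_mem ?_ (yy_mem_sqrtThreeGrade_zero k 0))) ?_)
    (zz_mem_sqrtThreeGrade_zero k 0)
  · exact mul_mem_sqrtThreeGrade_zero_left two_mem_sqrtThreeGrade_zero
      (rr_mem_sqrtThreeGrade_zero k 0)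
  · exact mul_mem_sqrtThreeGrade_zero_left two_mem_sqrtThreeGrade_zero
      (pp_mem_sqrtThreeGrade_zero k 0)

section Step

variable {n : ℕ}

lemma aC_succ_mem (hc : ∀ j, cC n j ∈ sqrtThreeGrade 1) (hd : ∀ j, dC n j ∈ sqrtThreeGrade 0)
    (j : ℕ) : aC (n + 1) j ∈ sqrtThreeGrade 0 := by
  rw [aC, ABCD]
  exact add_mem
    (mul_mem_sqrtThreeGrade_one_one inv_sqrt_three_mem_sqrtThreeGrade_one <|
      sum_mem fun l _ => mul_mem_sqrtThreeGrade_zero_right (hc _)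
        (two_zpow_mul_ss_add_qq_mem _ _ _))
    (sum_mem fun l _ => mul_mem_sqrtThreeGrade_zero_right (hd _)
      (two_zpow_mul_rr_add_pp_mem _ _ _))

lemma bC_succ_mem (hc : ∀ j, cC n j ∈ sqrtThreeGrade 1) (hd : ∀ j, dC n j ∈ sqrtThreeGrade 0)
    (j : ℕ) : bC (n + 1) j ∈ sqrtThreeGrade 1 := by
  rw [bC, ABCD]
  dsimp only
  split_ifs
  · refine add_mem (mul_mem_sqrtThreeGrade_zero_left ?_ <| sum_mem fun l _ =>
      mul_mem_sqrtThreeGrade_zero_right (hc _) (two_pow_mul_rr_yy_add_pp_zz_mem _ _))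
      (mul_mem_sqrtThreeGrade_zero_right ?_ <| sum_mem fun l _ =>
        mul_mem_sqrtThreeGrade_zero_right (hd _) (two_pow_mul_ss_add_qq_mem _ _ _))
    · simpa using ratCast_mem_sqrtThreeGrade_zero (1 / 3)
    · exact mul_mem_sqrtThreeGrade_zero_left two_mem_sqrtThreeGrade_zero
        inv_sqrt_three_mem_sqrtThreeGrade_one
  · exact add_mem
      (sum_mem fun l _ => mul_mem_sqrtThreeGrade_zero_right (hc _)
        (two_zpow_mul_rr_add_pp_mem _ _ _))
      (mul_mem_sqrtThreeGrade_zero_right inv_sqrt_three_mem_sqrtThreeGrade_one <|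
        sum_mem fun l _ => mul_mem_sqrtThreeGrade_zero_right (hd _)
          (two_zpow_mul_ss_add_qq_mem _ _ _))

lemma cC_succ_mem (ha : ∀ j, aC (n + 1) j ∈ sqrtThreeGrade 0)
    (hb : ∀ j, bC (n + 1) j ∈ sqrtThreeGrade 1) (j : ℕ) : cC (n + 1) j ∈ sqrtThreeGrade 1 := by
  rw [cC, ABCD]
  exact add_mem
    (mul_mem_sqrtThreeGrade_zero_right inv_sqrt_three_mem_sqrtThreeGrade_one <|
      sum_mem fun l _ => mul_mem_sqrtThreeGrade_zero_right (ha _)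
        (two_zpow_mul_ss_add_qq_mem _ _ _))
    (sum_mem fun l _ => mul_mem_sqrtThreeGrade_zero_right (hb _)
      (two_zpow_mul_rr_add_pp_mem _ _ _))

lemma dC_succ_mem (ha : ∀ j, aC (n + 1) j ∈ sqrtThreeGrade 0)
    (hb : ∀ j, bC (n + 1) j ∈ sqrtThreeGrade 1) (j : ℕ) : dC (n + 1) j ∈ sqrtThreeGrade 0 := by
  rw [dC, ABCD]
  dsimp only
  split_ifs
  · refine add_mem (mul_mem_sqrtThreeGrade_zero_left ?_ <| sum_mem fun l _ =>
      mul_mem_sqrtThreeGrade_zero_right (ha _) (two_pow_mul_rr_yy_add_pp_zz_mem _ _))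
      (mul_mem_sqrtThreeGrade_one_one ?_ <| sum_mem fun l _ =>
        mul_mem_sqrtThreeGrade_zero_right (hb _) (two_pow_mul_ss_add_qq_mem _ _ _))
    · simpa using ratCast_mem_sqrtThreeGrade_zero (1 / 3)
    · exact mul_mem_sqrtThreeGrade_zero_left two_mem_sqrtThreeGrade_zero
        inv_sqrt_three_mem_sqrtThreeGrade_one
  · exact add_mem
      (sum_mem fun l _ => mul_mem_sqrtThreeGrade_zero_right (ha _)
        (two_zpow_mul_rr_add_pp_mem _ _ _))
      (mul_mem_sqrtThreeGrade_one_one inv_sqrt_three_mem_sqrtThreeGrade_one <|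
        sum_mem fun l _ => mul_mem_sqrtThreeGrade_zero_right (hb _)
          (two_zpow_mul_ss_add_qq_mem _ _ _))

end Step

lemma ABCD_mem_sqrtThreeGrade (n : ℕ) :
    (∀ j, aC n j ∈ sqrtThreeGrade 0) ∧ (∀ j, bC n j ∈ sqrtThreeGrade 1) ∧
      (∀ j, cC n j ∈ sqrtThreeGrade 1) ∧ (∀ j, dC n j ∈ sqrtThreeGrade 0) := by
  induction n with
  | zero =>
    refine ⟨fun _ => zero_mem _, fun _ => zero_mem _, fun _ => zero_mem _, fun j => ?_⟩
    rw [dC, ABCD]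
    dsimp only
    split_ifs
    exacts [one_mem_sqrtThreeGrade_zero, zero_mem _]
  | succ n ih =>
    obtain ⟨-, -, hc, hd⟩ := ih
    have ha := aC_succ_mem hc hd
    have hb := bC_succ_mem hc hd
    exact ⟨ha, hb, cC_succ_mem ha hb, dC_succ_mem ha hb⟩

/-- The coefficients `a_{n,j}` and `d_{n,k}` are rational, while `b_{n,j}` and
`c_{n,j}` are rational multiples of `√3`, for all `n ≥ 0`, `0 ≤ j ≤ n−1`, `0 ≤ k ≤ n`. -/
theorem rationality_of_coefficients (n : ℕ) :
    (∀ j, j < n → ∃ q : ℚ, aC n j = (q : ℝ)) ∧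
    (∀ k, k ≤ n → ∃ q : ℚ, dC n k = (q : ℝ)) ∧
    (∀ j, j < n → ∃ q : ℚ, bC n j = Real.sqrt 3 * (q : ℝ)) ∧
    (∀ j, j < n → ∃ q : ℚ, cC n j = Real.sqrt 3 * (q : ℝ)) := by
  obtain ⟨ha, hb, hc, hd⟩ := ABCD_mem_sqrtThreeGrade n
  exact ⟨fun j _ => mem_sqrtThreeGrade_zero.1 (ha j), fun k _ => mem_sqrtThreeGrade_zero.1 (hd k),
    fun j _ => mem_sqrtThreeGrade_one.1 (hb j), fun j _ => mem_sqrtThreeGrade_one.1 (hc j)⟩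
end

section
/- Let a, b be positive real numbers with a ≠ b, let β be a real number with −1 < β < 3 and β ∉ {0, 1, 2}, and set θ = 2π/3. Then ∫₀^∞ x^β / ((x² − a x + a²)(x² − b x + b²)) dx = (2π/(√3(a³−b³))) · [ (a^β − b^β) sin(θ(β−2)) − (b a^{β−1} − a b^{β−1}) sin(θβ) ] / sin(πβ). -/
open MeasureTheory Set Real

/-!
Since `(x² - c x + c²)(x + c) = x³ + c³`, the integrand equals
`(x^(β+2) + (a + b) x^(β+1) + a b x^β) / ((x³ + a³)(x³ + b³))`. Each of the three pieces is split
by partial fractions into integrals `∫₀^∞ x^γ / (x³ + c³) dx`, which the substitution `x = c t^(1/3)`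
turns into the Beta integral `∫₀^∞ t^(s-1) / (1 + t) dt = π / sin (π s)`. What remains is the
trigonometric identity `1 / sin y + 1 / sin (y + π/3) = 2√3 sin (2y + π/3) / sin 3y`.
-/

theorem integral_rpow_mul_one_sub_rpow_neg {s : ℝ} (hs0 : 0 < s) (hs1 : s < 1) :
    ∫ x in (0 : ℝ)..1, x ^ (s - 1) * (1 - x) ^ (-s) = π / sin (π * s) := by
  have hB : Complex.betaIntegral s (1 - s) = π / Complex.sin (π * s) := by
    have h := Complex.Gamma_mul_Gamma_eq_betaIntegral (s := s) (t := 1 - s)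
      (by simpa using hs0) (by simpa using hs1)
    rwa [add_sub_cancel, Complex.Gamma_one, one_mul, Complex.Gamma_mul_Gamma_one_sub,
      eq_comm] at h
  have hre : Complex.betaIntegral s (1 - s) =
      ((∫ x in (0 : ℝ)..1, x ^ (s - 1) * (1 - x) ^ (-s) : ℝ) : ℂ) := by
    rw [Complex.betaIntegral, ← intervalIntegral.integral_ofReal]
    refine intervalIntegral.integral_congr fun x hx => ?_
    rw [uIcc_of_le zero_le_one] at hx
    simp only [Complex.ofReal_mul, Complex.ofReal_cpow hx.1,
      Complex.ofReal_cpow (sub_nonneg.2 hx.2)]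
    push_cast
    ring_nf
  exact_mod_cast hre.symm.trans hB

theorem integral_rpow_div_one_add {s : ℝ} (hs0 : 0 < s) (hs1 : s < 1) :
    ∫ t in Ioi (0 : ℝ), t ^ (s - 1) / (1 + t) = π / sin (π * s) := by
  set f : ℝ → ℝ := fun x => x / (1 - x)
  have hf_image : f '' Ioo 0 1 = Ioi 0 := by
    ext t
    refine ⟨?_, fun ht => ⟨t / (1 + t), ⟨by have := mem_Ioi.1 ht; positivity, ?_⟩, ?_⟩⟩
    · rintro ⟨x, hx, rfl⟩
      exact div_pos hx.1 (sub_pos.2 hx.2)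
    · have := mem_Ioi.1 ht
      rw [div_lt_one (by positivity)]
      linarith
    · have := mem_Ioi.1 ht
      simp only [f]
      field_simp
      ring
  have hf_deriv : ∀ x ∈ Ioo (0 : ℝ) 1, HasDerivWithinAt f ((1 - x) ^ 2)⁻¹ (Ioo 0 1) x := by
    intro x hx
    have hx1 : 1 - x ≠ 0 := (sub_pos.2 hx.2).ne'
    have h := (hasDerivAt_id' x).div ((hasDerivAt_id' x).const_sub 1) hx1
    exact (h.congr_deriv (by field_simp; ring)).hasDerivWithinAt
  have hf_inj : InjOn f (Ioo 0 1) := by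
    intro x hx y hy hxy
    have hx1 : 1 - x ≠ 0 := (sub_pos.2 hx.2).ne'
    have hy1 : 1 - y ≠ 0 := (sub_pos.2 hy.2).ne'
    simp only [f] at hxy
    field_simp at hxy
    linarith
  rw [← hf_image, integral_image_eq_integral_abs_deriv_smul measurableSet_Ioo hf_deriv hf_inj,
    ← integral_rpow_mul_one_sub_rpow_neg hs0 hs1, intervalIntegral.integral_of_le zero_le_one,
    integral_Ioc_eq_integral_Ioo]
  refine setIntegral_congr_fun measurableSet_Ioo fun x hx => ?_
  have hx0 : 0 < x := hx.1
  have hx1 : 0 < 1 - x := sub_pos.2 hx.2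
  have h1f : 1 + f x = (1 - x)⁻¹ := by simp only [f]; field_simp; ring
  rw [smul_eq_mul, h1f, abs_of_pos (by positivity), div_rpow hx0.le hx1.le, rpow_sub hx1,
    rpow_one, rpow_neg hx1.le]
  field_simp

theorem integral_rpow_div_pow_add_one {n : ℕ} {γ : ℝ} (hγ₁ : -1 < γ) (hγ₂ : γ < n - 1) :
    ∫ x in Ioi (0 : ℝ), x ^ γ / (x ^ n + 1) = π / (n * sin (π * ((γ + 1) / n))) := by
  have hn : (0 : ℝ) < n := by linarith
  have hmellin := integral_rpow_div_one_add (s := (γ + 1) / n)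
    (div_pos (by linarith) hn) ((div_lt_one hn).2 (by linarith))
  rw [← integral_comp_rpow_Ioi_of_pos hn] at hmellin
  rw [div_mul_eq_div_div_swap, ← hmellin, ← integral_div]
  refine setIntegral_congr_fun measurableSet_Ioi fun x hx => ?_
  have hx : 0 < x := hx
  have hexp : x ^ ((n : ℝ) - 1) * x ^ ((n : ℝ) * ((γ + 1) / n - 1)) = x ^ γ := by
    rw [← rpow_add hx]
    congr 1
    field_simp
    ring
  rw [smul_eq_mul, ← rpow_mul hx.le, rpow_natCast, add_comm 1, ← hexp]
  field_simp

theorem integral_rpow_div_pow_add_pow {n : ℕ} {c γ : ℝ} (hc : 0 < c) (hγ₁ : -1 < γ)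
    (hγ₂ : γ < n - 1) :
    ∫ x in Ioi (0 : ℝ), x ^ γ / (x ^ n + c ^ n) =
      c ^ (γ + 1 - n) * (π / (n * sin (π * ((γ + 1) / n)))) := by
  have hscale := integral_comp_mul_left_Ioi' (fun x => x ^ γ / (x ^ n + c ^ n)) 0 hc
  rw [mul_zero] at hscale
  rw [← integral_rpow_div_pow_add_one hγ₁ hγ₂, ← integral_const_mul, ← hscale,
    ← integral_smul]
  refine setIntegral_congr_fun measurableSet_Ioi fun x hx => ?_
  have hx : 0 < x := hx
  rw [smul_eq_mul, mul_rpow hc.le hx.le, mul_pow, rpow_sub hc, rpow_add_one hc.ne',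
    rpow_natCast]
  field_simp

theorem integrableOn_Ioi_rpow_div_of_le {γ p m : ℝ} {d : ℝ → ℝ} (hγ : -1 < γ)
    (hγp : γ + 1 < p) (hd : ContinuousOn d (Ioi 0)) (hm : 0 < m)
    (hlow : ∀ x ∈ Ioc (0 : ℝ) 1, m ≤ d x) (hup : ∀ x ∈ Ioi (1 : ℝ), x ^ p ≤ d x) :
    IntegrableOn (fun x => x ^ γ / d x) (Ioi 0) := by
  have hd_pos : ∀ x ∈ Ioi (0 : ℝ), 0 < d x := by
    intro x hx
    rcases le_or_gt x 1 with h | h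
    · exact hm.trans_le (hlow x ⟨hx, h⟩)
    · exact (rpow_pos_of_pos hx p).trans_le (hup x h)
  have hcont : ContinuousOn (fun x => x ^ γ / d x) (Ioi 0) :=
    (continuousOn_id.rpow_const fun x hx => Or.inl (ne_of_gt hx)).div hd
      fun x hx => (hd_pos x hx).ne'
  rw [← Ioc_union_Ioi_eq_Ioi zero_le_one]
  refine IntegrableOn.union ?_ ?_
  · refine Integrable.mono' ((intervalIntegral.intervalIntegrable_rpow' hγ).1.div_const m)
      ((hcont.mono Ioc_subset_Ioi_self).aestronglyMeasurable measurableSet_Ioc) ?_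
    filter_upwards [ae_restrict_mem measurableSet_Ioc] with x hx
    rw [norm_of_nonneg (div_nonneg (rpow_nonneg hx.1.le _) (hd_pos x hx.1).le)]
    exact div_le_div_of_nonneg_left (rpow_nonneg hx.1.le _) hm (hlow x hx)
  · refine Integrable.mono' (integrableOn_Ioi_rpow_of_lt (by linarith : γ - p < -1) one_pos)
      ((hcont.mono (Ioi_subset_Ioi zero_le_one)).aestronglyMeasurable measurableSet_Ioi) ?_
    filter_upwards [ae_restrict_mem measurableSet_Ioi] with x hx
    have hx0 : (0 : ℝ) < x := one_pos.trans hx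
    rw [norm_of_nonneg (div_nonneg (rpow_nonneg hx0.le _) (hd_pos x hx0).le), rpow_sub hx0]
    exact div_le_div_of_nonneg_left (rpow_nonneg hx0.le _) (rpow_pos_of_pos hx0 p) (hup x hx)

theorem integrableOn_rpow_div_pow_add_pow {n : ℕ} {c γ : ℝ} (hc : 0 < c) (hγ₁ : -1 < γ)
    (hγ₂ : γ < n - 1) : IntegrableOn (fun x => x ^ γ / (x ^ n + c ^ n)) (Ioi 0) := by
  refine integrableOn_Ioi_rpow_div_of_le (p := n) hγ₁ (by linarith) (by fun_prop) (pow_pos hc n)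
    (fun x hx => ?_) (fun x hx => ?_)
  · have := pow_pos hx.1 n
    linarith
  · rw [rpow_natCast]
    have := pow_pos hc n
    linarith

theorem integrableOn_rpow_div_mul_pow_add_pow {n : ℕ} {a b γ : ℝ} (ha : 0 < a) (hb : 0 < b)
    (hγ₁ : -1 < γ) (hγ₂ : γ < 2 * n - 1) :
    IntegrableOn (fun x => x ^ γ / ((x ^ n + a ^ n) * (x ^ n + b ^ n))) (Ioi 0) := by
  refine integrableOn_Ioi_rpow_div_of_le (p := 2 * n) hγ₁ (by linarith) (by fun_prop)
    (mul_pos (pow_pos ha n) (pow_pos hb n)) (fun x hx => ?_) (fun x hx => ?_)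
  · have := pow_pos hx.1 n
    gcongr <;> linarith
  · rw [show (2 * n : ℝ) = (n * 2 : ℕ) by push_cast; ring, rpow_natCast, pow_mul, sq]
    have := pow_pos (one_pos.trans hx.out) n
    have := pow_pos ha n
    have := pow_pos hb n
    gcongr <;> linarith

theorem pow_sub_pow_ne_zero_of_ne {n : ℕ} {a b : ℝ} (ha : 0 < a) (hb : 0 < b) (hab : a ≠ b)
    (hn : n ≠ 0) : a ^ n - b ^ n ≠ 0 :=
  sub_ne_zero.2 fun h => hab ((pow_left_inj₀ ha.le hb.le hn).1 h)

theorem integral_rpow_div_mul_pow_add_pow_of_lt {n : ℕ} {a b γ : ℝ} (ha : 0 < a) (hb : 0 < b)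
    (hab : a ≠ b) (hγ₁ : -1 < γ) (hγ₂ : γ < n - 1) :
    ∫ x in Ioi (0 : ℝ), x ^ γ / ((x ^ n + a ^ n) * (x ^ n + b ^ n)) =
      (b ^ (γ + 1 - n) - a ^ (γ + 1 - n)) / (a ^ n - b ^ n) *
        (π / (n * sin (π * ((γ + 1) / n)))) := by
  have habn := pow_sub_pow_ne_zero_of_ne ha hb hab (n := n) (by rintro rfl; simp at hγ₂; linarith)
  have hsplit : ∀ x ∈ Ioi (0 : ℝ), x ^ γ / ((x ^ n + a ^ n) * (x ^ n + b ^ n)) =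
      (x ^ γ / (x ^ n + b ^ n) - x ^ γ / (x ^ n + a ^ n)) / (a ^ n - b ^ n) := by
    intro x hx
    have : 0 < x := hx
    field_simp
    ring
  rw [setIntegral_congr_fun measurableSet_Ioi hsplit, integral_div,
    integral_sub (integrableOn_rpow_div_pow_add_pow hb hγ₁ hγ₂)
      (integrableOn_rpow_div_pow_add_pow ha hγ₁ hγ₂),
    integral_rpow_div_pow_add_pow hb hγ₁ hγ₂, integral_rpow_div_pow_add_pow ha hγ₁ hγ₂]
  ring

-- Here `x ^ γ / (x ^ n + c ^ n)` is no longer integrable, so the partial fractions are taken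
-- after splitting off `x ^ n` from the numerator.
theorem integral_rpow_div_mul_pow_add_pow_of_gt {n : ℕ} {a b γ : ℝ} (ha : 0 < a) (hb : 0 < b)
    (hab : a ≠ b) (hγ₁ : n - 1 < γ) (hγ₂ : γ < 2 * n - 1) :
    ∫ x in Ioi (0 : ℝ), x ^ γ / ((x ^ n + a ^ n) * (x ^ n + b ^ n)) =
      (b ^ (γ + 1 - n) - a ^ (γ + 1 - n)) / (a ^ n - b ^ n) *
        (π / (n * sin (π * ((γ + 1) / n)))) := by
  have hn : n ≠ 0 := by rintro rfl; simp at hγ₂; linarith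
  have habn := pow_sub_pow_ne_zero_of_ne ha hb hab hn
  have hδ₁ : -1 < γ - n := by linarith
  have hδ₂ : γ - n < n - 1 := by linarith
  have hsplit : ∀ x ∈ Ioi (0 : ℝ), x ^ γ / ((x ^ n + a ^ n) * (x ^ n + b ^ n)) =
      (a ^ n * (x ^ (γ - n) / (x ^ n + a ^ n)) - b ^ n * (x ^ (γ - n) / (x ^ n + b ^ n))) /
        (a ^ n - b ^ n) := by
    intro x hx
    have : 0 < x := hx
    rw [rpow_sub this, rpow_natCast]
    field_simp
    ring
  have hshift : ∀ c : ℝ, 0 < c → c ^ n * c ^ (γ - n + 1 - n) = c ^ (γ + 1 - n) := by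
    intro c hc
    rw [← rpow_natCast, ← rpow_add hc]
    ring_nf
  have hsin : sin (π * ((γ - n + 1) / n)) = -sin (π * ((γ + 1) / n)) := by
    rw [← sin_sub_pi]
    congr 1
    field_simp
    ring
  rw [setIntegral_congr_fun measurableSet_Ioi hsplit, integral_div,
    integral_sub ((integrableOn_rpow_div_pow_add_pow ha hδ₁ hδ₂).const_mul _)
      ((integrableOn_rpow_div_pow_add_pow hb hδ₁ hδ₂).const_mul _),
    integral_const_mul, integral_const_mul, integral_rpow_div_pow_add_pow ha hδ₁ hδ₂,
    integral_rpow_div_pow_add_pow hb hδ₁ hδ₂, hsin, ← mul_assoc, ← mul_assoc, hshift a ha,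
    hshift b hb]
  ring

theorem integral_rpow_div_mul_cube_add_cube {a b γ : ℝ} (ha : 0 < a) (hb : 0 < b)
    (hab : a ≠ b) (hγ₁ : -1 < γ) (hγ₂ : γ < 5) (hγ : γ ≠ 2) :
    ∫ x in Ioi (0 : ℝ), x ^ γ / ((x ^ 3 + a ^ 3) * (x ^ 3 + b ^ 3)) =
      (b ^ (γ - 2) - a ^ (γ - 2)) / (a ^ 3 - b ^ 3) * (π / (3 * sin (π * ((γ + 1) / 3)))) := by
  have h := hγ.lt_or_gt.elim
    (fun hlt => integral_rpow_div_mul_pow_add_pow_of_lt (n := 3) ha hb hab hγ₁ (by norm_num; linarith))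
    (fun hgt => integral_rpow_div_mul_pow_add_pow_of_gt (n := 3) ha hb hab (by norm_num; linarith)
      (by norm_num; linarith))
  push_cast at h
  rwa [show γ + 1 - 3 = γ - 2 by ring] at h

theorem sin_three_mul_eq_mul_mul (y : ℝ) :
    sin (3 * y) = sin y * (√3 * cos y - sin y) * (√3 * cos y + sin y) := by
  have h3 : √3 ^ 2 = 3 := sq_sqrt (by norm_num)
  rw [sin_three_mul]
  linear_combination (-(sin y * cos y ^ 2)) * h3 - 3 * sin y * sin_sq_add_cos_sq y

theorem inv_sin_add_inv_sin_add_pi_div_three {y : ℝ} (hy : sin (3 * y) ≠ 0) :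
    (sin y)⁻¹ + (sin (y + π / 3))⁻¹ = 2 * √3 * sin (2 * y + π / 3) / sin (3 * y) := by
  have h3 : √3 ^ 2 = 3 := sq_sqrt (by norm_num)
  have hshift : sin (y + π / 3) = (√3 * cos y + sin y) / 2 := by
    rw [sin_add, sin_pi_div_three, cos_pi_div_three]
    ring
  rw [sin_three_mul_eq_mul_mul] at hy ⊢
  obtain ⟨⟨hs, -⟩, hplus⟩ := mul_ne_zero_iff.1 hy |>.imp_left mul_ne_zero_iff.1
  have hshift_ne : (√3 * cos y + sin y) / 2 ≠ 0 := div_ne_zero hplus two_ne_zero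
  rw [hshift, inv_add_inv hs hshift_ne, div_eq_div_iff (mul_ne_zero hs hshift_ne) hy, sin_add,
    sin_two_mul, cos_two_mul', sin_pi_div_three, cos_pi_div_three]
  linear_combination (sin y ^ 3 * (√3 * cos y + sin y) / 2) * h3

theorem inv_sin_add_inv_sin_pi_mul_add_div_three {t : ℝ} (ht : sin (π * t) ≠ 0) :
    (sin (π * ((t + 1) / 3)))⁻¹ + (sin (π * ((t + 2) / 3)))⁻¹ =
        2 * √3 * sin (2 * π / 3 * t) / sin (π * t) ∧
      (sin (π * ((t + 2) / 3)))⁻¹ + (sin (π * ((t + 3) / 3)))⁻¹ =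
        -(2 * √3 * sin (2 * π / 3 * (t - 2)) / sin (π * t)) := by
  have h₁ := inv_sin_add_inv_sin_add_pi_div_three (y := π * ((t + 1) / 3))
    (by rwa [show 3 * (π * ((t + 1) / 3)) = π * t + π by ring, sin_add_pi, neg_ne_zero])
  have h₂ := inv_sin_add_inv_sin_add_pi_div_three (y := π * ((t + 2) / 3))
    (by rwa [show 3 * (π * ((t + 2) / 3)) = π * t + 2 * π by ring, sin_add_two_pi])
  rw [show 3 * (π * ((t + 1) / 3)) = π * t + π by ring, sin_add_pi,
    show 2 * (π * ((t + 1) / 3)) + π / 3 = 2 * π / 3 * t + π by ring, sin_add_pi,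
    show π * ((t + 1) / 3) + π / 3 = π * ((t + 2) / 3) by ring, mul_neg, neg_div_neg_eq] at h₁
  rw [show 3 * (π * ((t + 2) / 3)) = π * t + 2 * π by ring, sin_add_two_pi,
    show 2 * (π * ((t + 2) / 3)) + π / 3 = 2 * π / 3 * (t - 2) + π + 2 * π by ring,
    sin_add_two_pi, sin_add_pi, mul_neg, neg_div,
    show π * ((t + 2) / 3) + π / 3 = π * ((t + 3) / 3) by ring] at h₂
  exact ⟨h₁, h₂⟩

theorem rpow_div_mul_sq_sub_mul_add_sq {a b x : ℝ} (β : ℝ) (ha : 0 ≤ a) (hb : 0 ≤ b)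
    (hx : 0 < x) :
    x ^ β / ((x ^ 2 - a * x + a ^ 2) * (x ^ 2 - b * x + b ^ 2)) =
      x ^ (β + 2) / ((x ^ 3 + a ^ 3) * (x ^ 3 + b ^ 3)) +
        ((a + b) * (x ^ (β + 1) / ((x ^ 3 + a ^ 3) * (x ^ 3 + b ^ 3))) +
          a * b * (x ^ β / ((x ^ 3 + a ^ 3) * (x ^ 3 + b ^ 3)))) := by
  have hqa : 0 < x ^ 2 - a * x + a ^ 2 := by nlinarith [sq_nonneg (x - a), sq_nonneg a]
  have hqb : 0 < x ^ 2 - b * x + b ^ 2 := by nlinarith [sq_nonneg (x - b), sq_nonneg b]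
  have hxa : 0 < x + a := by linarith
  have hxb : 0 < x + b := by linarith
  rw [rpow_add hx, rpow_add hx, rpow_two, rpow_one,
    show (x ^ 3 + a ^ 3) * (x ^ 3 + b ^ 3) =
      (x ^ 2 - a * x + a ^ 2) * (x ^ 2 - b * x + b ^ 2) * ((x + a) * (x + b)) by ring]
  field_simp
  ring

theorem integral_rpow_div_mul_sq_sub_mul_add_sq {a b β : ℝ} (ha : 0 < a) (hb : 0 < b)
    (hβ₁ : -1 < β) (hβ₂ : β < 3) :
    ∫ x in Ioi (0 : ℝ), x ^ β / ((x ^ 2 - a * x + a ^ 2) * (x ^ 2 - b * x + b ^ 2)) =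
      (∫ x in Ioi (0 : ℝ), x ^ (β + 2) / ((x ^ 3 + a ^ 3) * (x ^ 3 + b ^ 3))) +
        ((a + b) * (∫ x in Ioi (0 : ℝ), x ^ (β + 1) / ((x ^ 3 + a ^ 3) * (x ^ 3 + b ^ 3))) +
          a * b * ∫ x in Ioi (0 : ℝ), x ^ β / ((x ^ 3 + a ^ 3) * (x ^ 3 + b ^ 3))) := by
  have hint : ∀ γ : ℝ, -1 < γ → γ < 5 →
      IntegrableOn (fun x => x ^ γ / ((x ^ 3 + a ^ 3) * (x ^ 3 + b ^ 3))) (Ioi 0) :=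
    fun γ h₁ h₂ => integrableOn_rpow_div_mul_pow_add_pow ha hb h₁ (by norm_num; linarith)
  have I₂ := hint (β + 2) (by linarith) (by linarith)
  have I₁ := (hint (β + 1) (by linarith) (by linarith)).const_mul (a + b)
  have I₀ := (hint β hβ₁ (by linarith)).const_mul (a * b)
  rw [setIntegral_congr_fun measurableSet_Ioi
      fun x hx => rpow_div_mul_sq_sub_mul_add_sq β ha.le hb.le hx,
    integral_add I₂ ?_, integral_add I₁ I₀, integral_const_mul, integral_const_mul]
  exact I₁.add I₀

/-- Evaluation of `I₂(β) = ∫₀^∞ x^β /((x²−ax+a²)(x²−bx+b²)) dx` for `−1 < β < 3`,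
`β ∉ {0,1,2}`, with `θ = 2π/3`. -/
theorem I2_eval (a b : ℝ) (ha : 0 < a) (hb : 0 < b) (hab : a ≠ b)
    (β : ℝ) (hβ₁ : -1 < β) (hβ₂ : β < 3) (h0 : β ≠ 0) (h1 : β ≠ 1) (h2 : β ≠ 2) :
    ∫ x in Set.Ioi (0 : ℝ),
        x ^ β / ((x ^ 2 - a * x + a ^ 2) * (x ^ 2 - b * x + b ^ 2)) =
      2 * Real.pi / (Real.sqrt 3 * (a ^ 3 - b ^ 3)) *
        (((a ^ β - b ^ β) * Real.sin (2 * Real.pi / 3 * (β - 2))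
            - (b * a ^ (β - 1) - a * b ^ (β - 1)) * Real.sin (2 * Real.pi / 3 * β)) /
          Real.sin (Real.pi * β)) := by
  have hsin : sin (π * β) ≠ 0 := by
    rw [Ne, sin_eq_zero_iff]
    rintro ⟨k, hk⟩
    have hkβ : (k : ℝ) = β := mul_right_cancel₀ pi_ne_zero (by linarith)
    have hk₁ : -1 < k := by exact_mod_cast hkβ ▸ hβ₁
    have hk₂ : k < 3 := by exact_mod_cast hkβ ▸ hβ₂
    interval_cases k <;> simp_all
  obtain ⟨hsum₁, hsum₂⟩ := inv_sin_add_inv_sin_pi_mul_add_div_three hsin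
  rw [integral_rpow_div_mul_sq_sub_mul_add_sq ha hb hβ₁ hβ₂,
    integral_rpow_div_mul_cube_add_cube ha hb hab (γ := β + 2) (by linarith) (by linarith)
      (by contrapose! h0; linarith),
    integral_rpow_div_mul_cube_add_cube ha hb hab (γ := β + 1) (by linarith) (by linarith)
      (by contrapose! h1; linarith),
    integral_rpow_div_mul_cube_add_cube ha hb hab hβ₁ (by linarith) h2, add_sub_cancel_right,
    show β + 1 - 2 = β - 1 by ring, show β + 1 + 1 = β + 2 by ring,
    show β + 2 + 1 = β + 3 by ring, rpow_sub_one ha.ne', rpow_sub_one hb.ne', rpow_sub ha,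
    rpow_sub hb, rpow_two, rpow_two]
  simp only [div_mul_eq_div_mul_one_div π 3, one_div]
  -- Eliminating the outer two reciprocal sines leaves `(sin (π * ((β + 2) / 3)))⁻¹`, which cancels.
  rw [eq_sub_of_add_eq hsum₁, eq_sub_of_add_eq' hsum₂]
  have hab₃ := pow_sub_pow_ne_zero_of_ne ha hb hab three_ne_zero
  field_simp
  linear_combination 2 * (a * b * sin (π * 2 * (β - 2) / 3) * (a ^ β - b ^ β) +
    sin (π * 2 * β / 3) * (b ^ β * a ^ 2 - a ^ β * b ^ 2)) * sq_sqrt zero_le_three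
end

section
/- For every integer h ≥ 1, ∫₀¹ (log t)^{2h} · [ (1+t)/(1−t³) + (1−t)/(1+t³) ] dt = 2·(2h)!·(1 − 1/3^{2h+1})·(1 − 1/2^{2h+1})·ζ(2h+1), where ζ is the Riemann zeta function. -/
/-!
Since `(1 + t) / (1 - t³) + (1 - t) / (1 + t³) = 2 (1 + t⁴) / (1 - t⁶)`, the integrand is the
nonnegative series `∑ₖ 2 (t^{6k} + t^{6k+4}) (log t)^{2h}`. Substituting `t = e^{-u}` gives
`∫₀¹ t^k (-log t)^n dt = n! / (k + 1)^{n+1}`, so integrating termwise leaves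
`2 (2h)! ∑ₖ ((6k+1)^{-s} + (6k+5)^{-s})` with `s = 2h + 1`: the Dirichlet series of `ζ(s)`
restricted to the integers prime to `6`, which is `(1 - 2^{-s}) (1 - 3^{-s}) ζ(s)` because removing
the multiples of a prime `p` from a series in `n^{-s}` multiplies it by `1 - p^{-s}`.
-/

open MeasureTheory Set Real

theorem HasSum.sum_fin_mul_add {α : Type*} [AddCommMonoid α] [TopologicalSpace α]
    [ContinuousAdd α] [RegularSpace α] {f : ℕ → α} {a : α} (d : ℕ) [NeZero d]
    (hf : HasSum f a) : HasSum (fun k => ∑ j : Fin d, f (d * k + j)) a := by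
  refine ((Nat.divModEquiv d).symm.hasSum_iff.mpr hf).prod_fiberwise fun k => ?_
  simpa [mul_comm] using hasSum_fintype _

theorem HasSum.indicator_not_dvd {α : Type*} [Ring α] [TopologicalSpace α] [IsTopologicalRing α]
    {f : ℕ → α} {a c : α} {p : ℕ} (hf : HasSum f a) (hp : p ≠ 0)
    (hfp : ∀ n, f (p * n) = c * f n) :
    HasSum ({n | ¬ p ∣ n}.indicator f) ((1 - c) * a) := by
  have hdvd : HasSum ({n | p ∣ n}.indicator f) (c * a) := by
    have hrange : {n | p ∣ n} = range (p * ·) := by ext; simp [Dvd.dvd, eq_comm]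
    rw [hrange, ← hasSum_subtype_iff_indicator]
    refine (mul_right_injective₀ hp).hasSum_range_iff.mpr ?_
    simpa [Function.comp_def, hfp] using hf.mul_left c
  rw [sub_mul, one_mul, ← compl_ofPred, indicator_compl]
  exact hf.sub hdvd

theorem HasSum.six_mul_add_one_add_five {α : Type*} [AddCommMonoid α] [TopologicalSpace α]
    [ContinuousAdd α] [RegularSpace α] {f : ℕ → α} {a : α}
    (hf : HasSum ({n | ¬ 3 ∣ n}.indicator ({n | ¬ 2 ∣ n}.indicator f)) a) :
    HasSum (fun k => f (6 * k + 1) + f (6 * k + 5)) a := by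
  convert hf.sum_fin_mul_add 6 using 2 with k
  simp [Fin.sum_univ_succ, indicator_apply, Nat.dvd_iff_mod_eq_zero, Nat.add_mod, Nat.mul_mod]

theorem hasSum_one_div_six_mul_add_one_add_five_pow {s : ℕ} (hs : 1 < s) :
    HasSum (fun k : ℕ => 1 / (6 * k + 1 : ℝ) ^ s + 1 / (6 * k + 5 : ℝ) ^ s)
      ((1 - 1 / 3 ^ s) * (1 - 1 / 2 ^ s) * ∑' n : ℕ, 1 / (n : ℝ) ^ s) := by
  set f : ℕ → ℝ := fun n => 1 / (n : ℝ) ^ s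
  have hf : Summable f := Real.summable_one_div_nat_pow.mpr hs
  have hmul (p n : ℕ) : f (p * n) = 1 / p ^ s * f n := by
    simp only [f, Nat.cast_mul, mul_pow, one_div, mul_inv]
  have hodd := hf.hasSum.indicator_not_dvd two_ne_zero (c := 1 / 2 ^ s) (by exact_mod_cast hmul 2)
  have hcoprime := hodd.indicator_not_dvd three_ne_zero (c := 1 / 3 ^ s) fun n => by
    simp [indicator_apply, hmul, show 3 * n % 2 = n % 2 by omega]
  rw [mul_assoc]
  simpa [f] using hcoprime.six_mul_add_one_add_five

theorem image_exp_neg_Ioi_zero : (fun u : ℝ => exp (-u)) '' Ioi 0 = Ioo 0 1 := by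
  ext x
  constructor
  · rintro ⟨u, hu, rfl⟩
    exact ⟨exp_pos _, exp_lt_one_iff.mpr (neg_lt_zero.mpr hu)⟩
  · rintro ⟨hx0, hx1⟩
    exact ⟨-log x, neg_pos.mpr (log_neg hx0 hx1), by simp [exp_log hx0]⟩

theorem integral_Ioo_zero_one_eq_integral_exp_neg {E : Type*} [NormedAddCommGroup E]
    [NormedSpace ℝ E] (g : ℝ → E) :
    ∫ t in Ioo 0 1, g t = ∫ u in Ioi 0, exp (-u) • g (exp (-u)) := by
  have hderiv (u : ℝ) : HasDerivWithinAt (fun u => exp (-u)) (-exp (-u)) (Ioi 0) u := by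
    simpa using ((hasDerivAt_neg u).exp).hasDerivWithinAt
  have hinj : InjOn (fun u : ℝ => exp (-u)) (Ioi 0) := fun a _ b _ hab => by
    simpa using exp_injective hab
  rw [← image_exp_neg_Ioi_zero,
    integral_image_eq_integral_abs_deriv_smul measurableSet_Ioi (fun u _ => hderiv u) hinj]
  simp [abs_of_pos (exp_pos _)]

theorem integral_pow_mul_neg_log_pow (k n : ℕ) :
    ∫ t in Ioo 0 1, t ^ k * (-log t) ^ n = n.factorial / ((k : ℝ) + 1) ^ (n + 1) := by
  have hk : (0 : ℝ) < k + 1 := by positivity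
  rw [integral_Ioo_zero_one_eq_integral_exp_neg]
  calc ∫ u in Ioi 0, exp (-u) • (exp (-u) ^ k * (-log (exp (-u))) ^ n)
      = ∫ u in Ioi 0, u ^ ((n + 1 : ℝ) - 1) * exp (-((k + 1) * u)) := by
        refine setIntegral_congr_fun measurableSet_Ioi fun u _ => ?_
        rw [log_exp, neg_neg, add_sub_cancel_right, rpow_natCast, smul_eq_mul, ← exp_nat_mul,
          show -((k + 1) * u) = -u + k * -u by ring, exp_add]
        ring
    _ = n.factorial / ((k : ℝ) + 1) ^ (n + 1) := by
        rw [integral_rpow_mul_exp_neg_mul_Ioi (by positivity) hk, Gamma_nat_eq_factorial,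
          ← Nat.cast_add_one n, rpow_natCast, one_div, inv_pow]
        field_simp

-- A Bochner integral that is nonzero is not the junk value of a non-integrable function.
theorem integrableOn_pow_mul_neg_log_pow (k n : ℕ) :
    IntegrableOn (fun t => t ^ k * (-log t) ^ n) (Ioo 0 1) :=
  Integrable.of_integral_ne_zero <| by rw [integral_pow_mul_neg_log_pow]; positivity

theorem integral_neg_log_pow_mul_pow_six_mul_add (n k : ℕ) :
    ∫ t in Ioo 0 1, (-log t) ^ n * (2 * (t ^ (6 * k) + t ^ (6 * k + 4))) =
      2 * n.factorial * (1 / (6 * k + 1 : ℝ) ^ (n + 1) + 1 / (6 * k + 5 : ℝ) ^ (n + 1)) := by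
  have hsplit : (fun t : ℝ => (-log t) ^ n * (2 * (t ^ (6 * k) + t ^ (6 * k + 4)))) =
      fun t => 2 * (t ^ (6 * k) * (-log t) ^ n + t ^ (6 * k + 4) * (-log t) ^ n) :=
    funext fun t => by ring
  rw [hsplit, integral_const_mul, integral_add (integrableOn_pow_mul_neg_log_pow _ _)
    (integrableOn_pow_mul_neg_log_pow _ _), integral_pow_mul_neg_log_pow,
    integral_pow_mul_neg_log_pow]
  push_cast
  ring

theorem hasSum_two_mul_pow_six_mul_add {t : ℝ} (ht0 : 0 ≤ t) (ht1 : t < 1) :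
    HasSum (fun k : ℕ => 2 * (t ^ (6 * k) + t ^ (6 * k + 4)))
      ((1 + t) / (1 - t ^ 3) + (1 - t) / (1 + t ^ 3)) := by
  have ht3 : t ^ 3 < 1 := pow_lt_one₀ ht0 ht1 (by norm_num)
  have hgeom :=
    hasSum_geometric_of_lt_one (by positivity) (pow_lt_one₀ ht0 ht1 (by norm_num : 6 ≠ 0))
  have hterm : (fun k : ℕ => 2 * (t ^ (6 * k) + t ^ (6 * k + 4)))
      = fun k => 2 * (1 + t ^ 4) * (t ^ 6) ^ k := funext fun k => by rw [pow_add, pow_mul]; ring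
  have hval :
      (1 + t) / (1 - t ^ 3) + (1 - t) / (1 + t ^ 3) = 2 * (1 + t ^ 4) * (1 - t ^ 6)⁻¹ := by
    have h1 : 1 - t ^ 3 ≠ 0 := by linarith
    have h2 : 1 + t ^ 3 ≠ 0 := by positivity
    rw [show 1 - t ^ 6 = (1 - t ^ 3) * (1 + t ^ 3) by ring]
    field_simp
    ring
  rw [hterm, hval]
  exact hgeom.mul_left _

theorem integral_eq_of_hasSum_of_nonneg {α ι : Type*} [MeasurableSpace α] [Countable ι]
    {μ : Measure α} {F : ι → α → ℝ} {G : α → ℝ} {a : ℝ} (hF_int : ∀ i, Integrable (F i) μ)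
    (hF_nonneg : ∀ i, 0 ≤ᵐ[μ] F i) (hG : ∀ᵐ x ∂μ, HasSum (fun i => F i x) (G x))
    (ha : HasSum (fun i => ∫ x, F i x ∂μ) a) : ∫ x, G x ∂μ = a := by
  have hnorm : (fun i => ∫ x, ‖F i x‖ ∂μ) = fun i => ∫ x, F i x ∂μ :=
    funext fun i => integral_congr_ae <| (hF_nonneg i).mono fun x hx => Real.norm_of_nonneg hx
  rw [ha.unique (hasSum_integral_of_summable_integral_norm hF_int (hnorm ▸ ha.summable))]
  exact integral_congr_ae <| hG.mono fun x hx => hx.tsum_eq.symm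

theorem integral_neg_log_pow_mul {n : ℕ} (hn : n ≠ 0) :
    ∫ t in Ioo 0 1, (-log t) ^ n * ((1 + t) / (1 - t ^ 3) + (1 - t) / (1 + t ^ 3)) =
      2 * n.factorial * ((1 - 1 / 3 ^ (n + 1)) * (1 - 1 / 2 ^ (n + 1)) *
        ∑' m : ℕ, 1 / (m : ℝ) ^ (n + 1)) := by
  set F : ℕ → ℝ → ℝ := fun k t => (-log t) ^ n * (2 * (t ^ (6 * k) + t ^ (6 * k + 4)))
  have hF_int (k : ℕ) : IntegrableOn (F k) (Ioo 0 1) :=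
    Integrable.of_integral_ne_zero <| by
      rw [integral_neg_log_pow_mul_pow_six_mul_add]
      positivity
  have hF_nonneg (k : ℕ) : 0 ≤ᵐ[volume.restrict (Ioo 0 1)] F k :=
    ae_restrict_of_forall_mem measurableSet_Ioo fun t ⟨ht0, ht1⟩ => by
      have := neg_pos.2 (log_neg ht0 ht1)
      positivity
  refine integral_eq_of_hasSum_of_nonneg hF_int hF_nonneg
    (ae_restrict_of_forall_mem measurableSet_Ioo fun t ⟨ht0, ht1⟩ =>
      (hasSum_two_mul_pow_six_mul_add ht0.le ht1).mul_left _) ?_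
  simp only [F, integral_neg_log_pow_mul_pow_six_mul_add]
  exact (hasSum_one_div_six_mul_add_one_add_five_pow (by omega)).mul_left _

/-- `∫₀¹ log^{2h}t [(1+t)/(1−t³) + (1−t)/(1+t³)] dt
= 2(2h)!(1 − 3^{−(2h+1)})(1 − 2^{−(2h+1)}) ζ(2h+1)` for `h ≥ 1`. -/
theorem integral_log_pow_even (h : ℕ) (hh : 1 ≤ h) :
    ((∫ t in Set.Ioo (0 : ℝ) 1,
        Real.log t ^ (2 * h) * ((1 + t) / (1 - t ^ 3) + (1 - t) / (1 + t ^ 3))) : ℂ) =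
      2 * (Nat.factorial (2 * h) : ℂ) * (1 - 1 / 3 ^ (2 * h + 1)) * (1 - 1 / 2 ^ (2 * h + 1)) *
        riemannZeta (2 * (h : ℂ) + 1) := by
  have hreal := integral_neg_log_pow_mul (n := 2 * h) (by omega)
  simp only [(even_two_mul h).neg_pow] at hreal
  apply_fun ((↑) : ℝ → ℂ) at hreal
  rw [← integral_complex_ofReal] at hreal
  push_cast at hreal
  have hzeta : riemannZeta (2 * (h : ℂ) + 1) = ∑' n : ℕ, 1 / (n : ℂ) ^ (2 * h + 1) := by
    exact_mod_cast zeta_nat_eq_tsum_of_gt_one (by omega : 1 < 2 * h + 1)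
  rw [hreal, hzeta]
  ring
end

section
/- For every integer h ≥ 0, ∫₀¹ (log t)^{2h+1} · [ 1/(t²+t+1) + 1/(t²−t+1) ] dt = −2·(2h+1)!·(1 + 1/2^{2h+2})·L(χ_{−3}, 2h+2), where L(χ_{−3}, s) denotes the Dirichlet L-function of the unique nontrivial Dirichlet character χ_{−3} modulo 3 (χ_{−3}(n)=1 if n≡1 mod 3, −1 if n≡2 mod 3, 0 otherwise). -/
open MeasureTheory

/-- `χ_{−3}`, the nontrivial character modulo 3, as a real-valued function on `ℕ`. -/
def chi3R (n : ℕ) : ℝ := if n % 3 = 1 then 1 else if n % 3 = 2 then -1 else 0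

/-!
The substitution `t = e^{-x}` turns `∫₀¹ tⁿ logᵐ t dt` into a Gamma integral, equal to
`(-1)ᵐ m! / (n+1)^{m+1}`. Since `1/(t²+t+1) + 1/(t²−t+1) = 2(1 − t⁴)/(1 − t⁶)`, expanding in
powers of `t⁶` and integrating termwise (every term has the sign of `(-1)ᵐ`, so the integrals of
their norms are again such values and are summable) gives
`2 (-1)ᵐ m! Σₖ ((6k+1)^{-s} − (6k+5)^{-s})` with `s = m + 1`. This is the sum of `χ₋₃(n)/nˢ` over
odd `n`, and since `χ₋₃(2) = −1` the even terms contribute `−2^{-s} L(χ₋₃, s)`, so the odd part is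
`(1 + 2^{-s}) L(χ₋₃, s)`.
-/

open Set Real
open scoped Nat

lemma integral_pow_mul_exp_neg_mul_Ioi (m : ℕ) {c : ℝ} (hc : 0 < c) :
    ∫ x in Ioi (0 : ℝ), x ^ m * exp (-(c * x)) = m ! / c ^ (m + 1) := by
  have h := integral_rpow_mul_exp_neg_mul_Ioi (a := m + 1) (by positivity) hc
  rw [add_sub_cancel_right, Gamma_nat_eq_factorial, ← Nat.cast_succ, rpow_natCast] at h
  simp_rw [rpow_natCast] at h
  rw [h, div_pow, one_pow, one_div_mul_eq_div]

lemma integrableOn_pow_mul_exp_neg_mul_Ioi (m : ℕ) {c : ℝ} (hc : 0 < c) :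
    IntegrableOn (fun x : ℝ => x ^ m * exp (-(c * x))) (Ioi 0) := by
  simpa [rpow_natCast] using
    integrableOn_rpow_mul_exp_neg_mul_rpow (p := 1) (s := m)
      (by linarith [m.cast_nonneg (α := ℝ)]) one_pos hc

lemma image_exp_neg_Ioi : (fun x : ℝ => exp (-x)) '' Ioi 0 = Ioo 0 1 := by
  ext y
  constructor
  · rintro ⟨x, hx, rfl⟩
    exact ⟨exp_pos _, exp_lt_one_iff.mpr (neg_lt_zero.mpr hx)⟩
  · rintro ⟨hy0, hy1⟩
    exact ⟨-log y, neg_pos.mpr (log_neg hy0 hy1), by simp [exp_log hy0]⟩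

section ExpNegSubstitution

variable {E : Type*} [NormedAddCommGroup E] [NormedSpace ℝ E]

lemma integral_Ioo_zero_one_eq_integral_Ioi_exp_neg (g : ℝ → E) :
    ∫ t in Ioo (0 : ℝ) 1, g t = ∫ x in Ioi (0 : ℝ), exp (-x) • g (exp (-x)) := by
  rw [← image_exp_neg_Ioi, integral_image_eq_integral_abs_deriv_smul measurableSet_Ioi
    (fun x _ => (hasDerivAt_neg' x).exp.hasDerivWithinAt) (exp_injective.comp neg_injective).injOn]
  simp [abs_of_pos (exp_pos _)]

lemma integrableOn_Ioo_zero_one_iff_exp_neg (g : ℝ → E) :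
    IntegrableOn g (Ioo 0 1) ↔ IntegrableOn (fun x => exp (-x) • g (exp (-x))) (Ioi 0) := by
  rw [← image_exp_neg_Ioi, integrableOn_image_iff_integrableOn_abs_deriv_smul measurableSet_Ioi
    (fun x _ => (hasDerivAt_neg' x).exp.hasDerivWithinAt) (exp_injective.comp neg_injective).injOn]
  simp [abs_of_pos (exp_pos _)]

end ExpNegSubstitution

lemma exp_neg_mul_pow_mul_log_pow (n m : ℕ) (x : ℝ) :
    exp (-x) * (exp (-x) ^ n * log (exp (-x)) ^ m) = (-1) ^ m * (x ^ m * exp (-((n + 1) * x))) := by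
  rw [log_exp, neg_pow, ← exp_nat_mul, mul_left_comm, ← mul_assoc, ← exp_add]
  ring_nf

lemma integrableOn_pow_mul_log_pow (n m : ℕ) :
    IntegrableOn (fun t : ℝ => t ^ n * log t ^ m) (Ioo 0 1) := by
  rw [integrableOn_Ioo_zero_one_iff_exp_neg]
  simp_rw [smul_eq_mul, exp_neg_mul_pow_mul_log_pow]
  exact (integrableOn_pow_mul_exp_neg_mul_Ioi m (by positivity)).const_mul _

lemma integral_pow_mul_log_pow (n m : ℕ) :
    ∫ t in Ioo (0 : ℝ) 1, t ^ n * log t ^ m = (-1) ^ m * m ! / (n + 1) ^ (m + 1) := by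
  rw [integral_Ioo_zero_one_eq_integral_Ioi_exp_neg]
  simp_rw [smul_eq_mul, exp_neg_mul_pow_mul_log_pow]
  rw [integral_const_mul, integral_pow_mul_exp_neg_mul_Ioi m (by positivity), mul_div_assoc]

lemma summable_one_div_mul_add_pow {s : ℕ} (hs : 1 < s) {a : ℕ} (ha : a ≠ 0) (j : ℕ) :
    Summable fun k : ℕ => 1 / ((a : ℝ) * k + j) ^ s := by
  have hinj : Function.Injective fun k : ℕ => a * k + j := fun k l hkl => by
    simpa [ha] using hkl
  refine ((summable_one_div_nat_pow.mpr hs).comp_injective hinj).congr fun k => ?_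
  simp

lemma integral_pow_sub_pow_mul_log_pow (a b m : ℕ) :
    ∫ t in Ioo (0 : ℝ) 1, (t ^ a - t ^ b) * log t ^ m =
      (-1) ^ m * m ! * (1 / ((a : ℝ) + 1) ^ (m + 1) - 1 / ((b : ℝ) + 1) ^ (m + 1)) := by
  simp_rw [sub_mul]
  rw [integral_sub (integrableOn_pow_mul_log_pow a m) (integrableOn_pow_mul_log_pow b m),
    integral_pow_mul_log_pow, integral_pow_mul_log_pow]
  ring

lemma norm_pow_sub_pow_mul_log_pow {a b : ℕ} (hab : a ≤ b) (m : ℕ) {t : ℝ}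
    (ht : t ∈ Ioo (0 : ℝ) 1) :
    ‖(t ^ a - t ^ b) * log t ^ m‖ = (-1) ^ m * ((t ^ a - t ^ b) * log t ^ m) := by
  have hpow : 0 ≤ t ^ a - t ^ b := sub_nonneg.mpr (pow_le_pow_of_le_one ht.1.le ht.2.le hab)
  rw [Real.norm_eq_abs, abs_mul, abs_of_nonneg hpow, abs_pow,
    abs_of_nonpos (log_nonpos ht.1.le ht.2.le), neg_pow]
  ring

lemma log_pow_mul_add_inv_eq_tsum (m : ℕ) {t : ℝ} (ht : t ∈ Ioo (0 : ℝ) 1) :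
    log t ^ m * (1 / (t ^ 2 + t + 1) + 1 / (t ^ 2 - t + 1)) =
      2 * ∑' k : ℕ, (t ^ (6 * k) - t ^ (6 * k + 4)) * log t ^ m := by
  obtain ⟨h0, h1⟩ := ht
  have hplus : 0 < t ^ 2 + t + 1 := by positivity
  have hminus : 0 < t ^ 2 - t + 1 := by nlinarith
  have h6 : t ^ 6 < 1 := pow_lt_one₀ h0.le h1 (by norm_num)
  have h6' : 1 - t ^ 6 ≠ 0 := by linarith
  have hterm : ∀ k : ℕ, (t ^ (6 * k) - t ^ (6 * k + 4)) * log t ^ m =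
      (t ^ 6) ^ k * ((1 - t ^ 4) * log t ^ m) := fun k => by ring
  rw [tsum_congr hterm, tsum_mul_right, tsum_geometric_of_lt_one (by positivity) h6,
    div_add_div _ _ hplus.ne' hminus.ne', inv_mul_eq_div, mul_div_assoc', mul_div_assoc',
    div_eq_div_iff (mul_pos hplus hminus).ne' h6']
  ring

theorem integral_log_pow_mul_add_inv {m : ℕ} (hm : m ≠ 0) :
    ∫ t in Ioo (0 : ℝ) 1, log t ^ m * (1 / (t ^ 2 + t + 1) + 1 / (t ^ 2 - t + 1)) =
      2 * ((-1) ^ m * m ! * ∑' k : ℕ,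
        (1 / (6 * (k : ℝ) + 1) ^ (m + 1) - 1 / (6 * (k : ℝ) + 5) ^ (m + 1))) := by
  set F : ℕ → ℝ → ℝ := fun k t => (t ^ (6 * k) - t ^ (6 * k + 4)) * log t ^ m
  have hF : ∀ k, ∫ t in Ioo (0 : ℝ) 1, F k t =
      (-1) ^ m * m ! * (1 / (6 * (k : ℝ) + 1) ^ (m + 1) - 1 / (6 * (k : ℝ) + 5) ^ (m + 1)) :=
    fun k => by rw [integral_pow_sub_pow_mul_log_pow]; push_cast; ring_nf
  have hF_int : ∀ k, IntegrableOn (F k) (Ioo 0 1) := fun k => by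
    simp_rw [F, sub_mul]
    exact (integrableOn_pow_mul_log_pow _ m).sub (integrableOn_pow_mul_log_pow _ m)
  have hF_norm : ∀ k, ∫ t in Ioo (0 : ℝ) 1, ‖F k t‖ =
      m ! * (1 / (6 * (k : ℝ) + 1) ^ (m + 1) - 1 / (6 * (k : ℝ) + 5) ^ (m + 1)) := fun k => by
    rw [setIntegral_congr_fun measurableSet_Ioo
      (fun t ht => norm_pow_sub_pow_mul_log_pow (by omega) m ht), integral_const_mul, hF,
      ← mul_assoc, ← mul_assoc, ← pow_add, Even.neg_one_pow ⟨m, rfl⟩, one_mul]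
  have hsum : Summable fun k => ∫ t in Ioo (0 : ℝ) 1, ‖F k t‖ := by
    have h1 : Summable fun k : ℕ => 1 / (6 * (k : ℝ) + 1) ^ (m + 1) := by
      exact_mod_cast summable_one_div_mul_add_pow (a := 6) (by omega) (by norm_num) 1
    have h5 : Summable fun k : ℕ => 1 / (6 * (k : ℝ) + 5) ^ (m + 1) := by
      exact_mod_cast summable_one_div_mul_add_pow (a := 6) (by omega) (by norm_num) 5
    simpa only [hF_norm] using (h1.sub h5).mul_left _
  rw [setIntegral_congr_fun measurableSet_Ioo (fun t ht => log_pow_mul_add_inv_eq_tsum m ht),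
    integral_const_mul, ← integral_tsum_of_summable_integral_norm hF_int hsum, tsum_congr hF,
    tsum_mul_left]

lemma tsum_split_mod_three {R : Type*} [AddCommGroup R] [UniformSpace R] [IsUniformAddGroup R]
    [CompleteSpace R] [T0Space R] {f : ℕ → R} (hf : Summable f) :
    ∑' n, f n = ∑' m, f (3 * m) + ∑' m, f (3 * m + 1) + ∑' m, f (3 * m + 2) := by
  rw [Nat.sumByResidueClasses hf 3]
  refine (Fin.sum_univ_three _).trans ?_
  simp only [add_comm _ (3 * _)]
  rfl

lemma chi3R_two_mul (n : ℕ) : chi3R (2 * n) = -chi3R n := by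
  unfold chi3R
  split_ifs <;> first | omega | norm_num

lemma abs_chi3R_le_one (n : ℕ) : |chi3R n| ≤ 1 := by
  unfold chi3R
  split_ifs <;> norm_num

lemma summable_chi3R_div_pow {s : ℕ} (hs : 1 < s) :
    Summable fun n : ℕ => chi3R n / (n : ℝ) ^ s :=
  (summable_one_div_nat_pow.mpr hs).of_norm_bounded fun n => by
    rw [norm_div, norm_pow, Real.norm_natCast, Real.norm_eq_abs]
    exact div_le_div_of_nonneg_right (abs_chi3R_le_one n) (by positivity)

lemma one_add_one_div_two_pow_mul_tsum_chi3R {s : ℕ} (hs : 1 < s) :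
    (1 + 1 / 2 ^ s) * ∑' n : ℕ, chi3R n / (n : ℝ) ^ s =
      ∑' k : ℕ, chi3R (2 * k + 1) / ((2 * k + 1 : ℕ) : ℝ) ^ s := by
  have hL := summable_chi3R_div_pow hs
  have heven : ∀ k : ℕ, chi3R (2 * k) / ((2 * k : ℕ) : ℝ) ^ s =
      -(1 / 2 ^ s) * (chi3R k / (k : ℝ) ^ s) := fun k => by
    rw [chi3R_two_mul, Nat.cast_mul, mul_pow, Nat.cast_two]
    ring
  have hsplit := tsum_even_add_odd (f := fun n : ℕ => chi3R n / (n : ℝ) ^ s)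
    (hL.comp_injective (mul_right_injective₀ two_ne_zero))
    (hL.comp_injective fun a b hab => by omega)
  rw [tsum_congr heven, tsum_mul_left] at hsplit
  linear_combination -hsplit

lemma tsum_chi3R_odd_div_pow {s : ℕ} (hs : 1 < s) :
    ∑' k : ℕ, chi3R (2 * k + 1) / ((2 * k + 1 : ℕ) : ℝ) ^ s =
      ∑' k : ℕ, (1 / (6 * (k : ℝ) + 1) ^ s - 1 / (6 * (k : ℝ) + 5) ^ s) := by
  have hodd : Summable fun k : ℕ => chi3R (2 * k + 1) / ((2 * k + 1 : ℕ) : ℝ) ^ s :=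
    (summable_chi3R_div_pow hs).comp_injective fun a b hab => by omega
  have h1 : Summable fun k : ℕ => 1 / (6 * (k : ℝ) + 1) ^ s := by
    exact_mod_cast summable_one_div_mul_add_pow (a := 6) hs (by norm_num) 1
  have h5 : Summable fun k : ℕ => 1 / (6 * (k : ℝ) + 5) ^ s := by
    exact_mod_cast summable_one_div_mul_add_pow (a := 6) hs (by norm_num) 5
  have hchi : ∀ m : ℕ, chi3R (2 * (3 * m) + 1) = 1 ∧ chi3R (2 * (3 * m + 1) + 1) = 0 ∧
      chi3R (2 * (3 * m + 2) + 1) = -1 := fun m => by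
    refine ⟨?_, ?_, ?_⟩ <;> unfold chi3R <;> split_ifs <;> first | rfl | omega
  rw [tsum_split_mod_three hodd, h1.tsum_sub h5]
  simp only [hchi, zero_div, tsum_zero, add_zero, neg_div, tsum_neg, ← sub_eq_add_neg]
  push_cast
  ring_nf

/-- `∫₀¹ log^{2h+1}t [1/(t²+t+1) + 1/(t²−t+1)] dt
= −2(2h+1)!(1 + 2^{−(2h+2)}) L(χ_{−3}, 2h+2)` for `h ≥ 0`,
where `L(χ_{−3}, s) = Σ_{n≥1} χ_{−3}(n)/n^s`. -/
theorem integral_log_pow_odd (h : ℕ) :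
    ∫ t in Set.Ioo (0 : ℝ) 1,
        Real.log t ^ (2 * h + 1) * (1 / (t ^ 2 + t + 1) + 1 / (t ^ 2 - t + 1)) =
      -2 * (Nat.factorial (2 * h + 1) : ℝ) * (1 + 1 / 2 ^ (2 * h + 2)) *
        ∑' n : ℕ, chi3R n / (n : ℝ) ^ (2 * h + 2) := by
  have hs : 1 < 2 * h + 2 := by omega
  rw [integral_log_pow_mul_add_inv (by omega : 2 * h + 1 ≠ 0), Odd.neg_one_pow ⟨h, rfl⟩,
    show 2 * h + 1 + 1 = 2 * h + 2 from rfl, ← tsum_chi3R_odd_div_pow hs,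
    ← one_add_one_div_two_pow_mul_tsum_chi3R hs]
  ring
end

section
/- For every integer h ≥ 1, the derivative of the Riemann zeta function at the negative even integer −2h satisfies ζ'(−2h) = ((−1)^h (2h)! / 2^{2h+1}) · ζ(2h+1)/π^{2h}. -/
open Complex Filter Topology Real

/-!
Differentiate the functional equation `ζ (1 - s) = 2 (2π)^(-s) Γ(s) cos (π s / 2) ζ(s)` at
`s = 2h + 1`. The cosine vanishes there, so by the product rule only the term with its derivative
`-(π / 2) sin (π s / 2) = -(π / 2) (-1)^h` survives, and `Γ(2h + 1) = (2h)!`.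
-/

lemma DifferentiableAt.hasDerivAt_mul_of_eq_zero {𝕜 : Type*} [NontriviallyNormedField 𝕜]
    {f c : 𝕜 → 𝕜} {c' x : 𝕜} (hf : DifferentiableAt 𝕜 f x) (hc : HasDerivAt c c' x)
    (hcx : c x = 0) :
    HasDerivAt (fun y => f y * c y) (f x * c') x := by
  simpa [hcx] using hf.hasDerivAt.fun_mul hc

namespace Complex

lemma cos_pi_mul_two_mul_add_one_div_two (n : ℕ) : cos (π * (2 * n + 1) / 2) = 0 := by
  rw [show (π : ℂ) * (2 * n + 1) / 2 = π / 2 + n * π by ring, cos_antiperiodic.add_nat_mul_eq,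
    cos_pi_div_two, mul_zero]

lemma sin_pi_mul_two_mul_add_one_div_two (n : ℕ) : sin (π * (2 * n + 1) / 2) = (-1) ^ n := by
  rw [show (π : ℂ) * (2 * n + 1) / 2 = π / 2 + n * π by ring, sin_antiperiodic.add_nat_mul_eq,
    sin_pi_div_two, mul_one]

lemma hasDerivAt_cos_pi_mul_div_two (s : ℂ) :
    HasDerivAt (fun s => cos (π * s / 2)) (-sin (π * s / 2) * (π / 2)) s := by
  simpa using (((hasDerivAt_id s).const_mul (π : ℂ)).div_const 2).ccos

end Complex

noncomputable def zetaOneSubFactor (s : ℂ) : ℂ := 2 * (2 * π) ^ (-s) * Gamma s * riemannZeta s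

lemma ne_neg_natCast_of_re_pos {s : ℂ} (hs : 0 < s.re) (n : ℕ) : s ≠ -n := by
  rintro rfl
  simp only [neg_re, natCast_re, Left.neg_pos_iff] at hs
  exact hs.not_ge n.cast_nonneg

lemma riemannZeta_one_sub_eventuallyEq {s₀ : ℂ} (hs₀ : 0 < s₀.re) (hs₀' : s₀ ≠ 1) :
    (fun s => riemannZeta (1 - s)) =ᶠ[𝓝 s₀]
      fun s => zetaOneSubFactor s * cos (π * s / 2) := by
  have hopen : IsOpen {s : ℂ | 0 < s.re ∧ s ≠ 1} :=
    (isOpen_lt continuous_const continuous_re).inter isOpen_ne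
  filter_upwards [hopen.mem_nhds ⟨hs₀, hs₀'⟩] with s ⟨hs, hs'⟩
  rw [riemannZeta_one_sub (ne_neg_natCast_of_re_pos hs) hs', zetaOneSubFactor]
  ring

lemma differentiableAt_zetaOneSubFactor {s : ℂ} (hs : 0 < s.re) (hs' : s ≠ 1) :
    DifferentiableAt ℂ zetaOneSubFactor s := by
  have h2π : (2 * π : ℂ) ≠ 0 := by simp [pi_ne_zero]
  exact (((differentiableAt_const _).mul (differentiableAt_id.neg.const_cpow (Or.inl h2π))).mul
    (differentiableAt_Gamma s (ne_neg_natCast_of_re_pos hs))).mul (differentiableAt_riemannZeta hs')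

lemma zetaOneSubFactor_two_mul_add_one (n : ℕ) :
    zetaOneSubFactor (2 * n + 1) =
      2 * (2 * n).factorial * riemannZeta (2 * n + 1) / (2 * π) ^ (2 * n + 1) := by
  have hΓ : Complex.Gamma (2 * n + 1) = (2 * n).factorial := by
    exact_mod_cast Complex.Gamma_nat_eq_factorial (2 * n)
  have hpow : (2 * π : ℂ) ^ (-(2 * n + 1 : ℂ)) = ((2 * π : ℂ) ^ (2 * n + 1))⁻¹ := by
    have hcast : (2 * n + 1 : ℂ) = ((2 * n + 1 : ℕ) : ℂ) := by push_cast; ring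
    rw [hcast, cpow_neg, cpow_natCast]
  rw [zetaOneSubFactor, hΓ, hpow]
  ring

lemma hasDerivAt_riemannZeta_one_sub {s : ℂ} (hs : s ≠ 0) :
    HasDerivAt (fun s => riemannZeta (1 - s)) (-deriv riemannZeta (1 - s)) s := by
  have hζ : DifferentiableAt ℂ riemannZeta (1 - s) :=
    differentiableAt_riemannZeta (by simpa [sub_eq_self] using hs)
  simpa [Function.comp_def] using hζ.hasDerivAt.comp s ((hasDerivAt_id s).const_sub 1)

lemma hasDerivAt_riemannZeta_one_sub_at_two_mul_add_one {n : ℕ} (hn : 1 ≤ n) :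
    HasDerivAt (fun s => riemannZeta (1 - s))
      (zetaOneSubFactor (2 * n + 1) * (-(-1) ^ n * (π / 2))) (2 * n + 1) := by
  have hre : 0 < (2 * n + 1 : ℂ).re := by
    simpa using (by positivity : (0 : ℝ) < 2 * n + 1)
  have hne : (2 * n + 1 : ℂ) ≠ 1 := by norm_cast; omega
  refine ((differentiableAt_zetaOneSubFactor hre hne).hasDerivAt_mul_of_eq_zero ?_
    (cos_pi_mul_two_mul_add_one_div_two n)).congr_of_eventuallyEq
    (riemannZeta_one_sub_eventuallyEq hre hne)
  simpa [sin_pi_mul_two_mul_add_one_div_two] using hasDerivAt_cos_pi_mul_div_two (2 * n + 1)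

/-- `ζ'(−2h) = ((−1)^h (2h)! / 2^{2h+1}) ζ(2h+1)/π^{2h}` for every integer `h ≥ 1`. -/
theorem deriv_riemannZeta_neg_even (h : ℕ) (hh : 1 ≤ h) :
    deriv riemannZeta (-(2 * (h : ℂ))) =
      ((-1) ^ h * (Nat.factorial (2 * h) : ℂ) / 2 ^ (2 * h + 1)) *
        riemannZeta (2 * (h : ℂ) + 1) / (Real.pi : ℂ) ^ (2 * h) := by
  have hs : (2 * h + 1 : ℂ) ≠ 0 := by norm_cast
  have hneg_deriv := (hasDerivAt_riemannZeta_one_sub hs).unique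
    (hasDerivAt_riemannZeta_one_sub_at_two_mul_add_one hh)
  rw [show (1 : ℂ) - (2 * h + 1) = -(2 * h) by ring, zetaOneSubFactor_two_mul_add_one] at hneg_deriv
  rw [neg_eq_iff_eq_neg.mp hneg_deriv]
  have hπ : (π : ℂ) ≠ 0 := ofReal_ne_zero.mpr pi_ne_zero
  field_simp
  ring
end
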